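/- arXiv:2404.18302 — 4 statements merged into one kernel-verified Lean document; each statement's English description precedes it below -/
import Mathlib

section
/- Let n ≥ 1 and let v₁ = [a₁,b₁], …, v_m = [a_m,b_m] ∈ F₂^{2n} be linearly independent over F₂ with ⟨vᵢ,vⱼ⟩ₛ = 0 for all i, j (so the matrices E(aᵢ,bᵢ) pairwise commute). Then the 2ⁿ×2ⁿ matrix P := ∏_{i=1}^m (1/2)(I + E(aᵢ,bᵢ)) satisfies P² = P, Pᴴ = P, and trace(P) = 2^{n−m}. (In particular, a stabilizer code on n qubits with m independent stabilizer generators has a code space of dimension 2^{n−m}, i.e., it encodes k = n − m logical qubits.) -/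
open scoped Matrix ComplexOrder

/-- Pauli `X` matrix. -/
noncomputable def pauliX : Matrix (Fin 2) (Fin 2) ℂ := !![0, 1; 1, 0]

/-- Pauli `Z` matrix. -/
noncomputable def pauliZ : Matrix (Fin 2) (Fin 2) ℂ := !![1, 0; 0, -1]

/-- The single-qubit factor `i^{ab} X^a Z^b`. -/
noncomputable def pauliFactor (a b : ZMod 2) : Matrix (Fin 2) (Fin 2) ℂ :=
  (Complex.I ^ (a.val * b.val)) • (pauliX ^ a.val * pauliZ ^ b.val)

/-- `E(a,b) := ⨂_{j} i^{a_j b_j} X^{a_j} Z^{b_j}`, realized as the matrix indexed by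
`Fin n → Fin 2` whose `(x,y)` entry is the product of the corresponding entries of the
factors (the Kronecker product over the `n` factors). -/
noncomputable def EOp {n : ℕ} (a b : Fin n → ZMod 2) :
    Matrix (Fin n → Fin 2) (Fin n → Fin 2) ℂ :=
  Matrix.of fun x y => ∏ j : Fin n, pauliFactor (a j) (b j) (x j) (y j)

/-- The symplectic inner product `⟨[a,b],[a',b']⟩ₛ = a·b' + a'·b` in `F₂`. -/
def sympIP {n : ℕ} (a b a' b' : Fin n → ZMod 2) : ZMod 2 :=
  (∑ j : Fin n, a j * b' j) + (∑ j : Fin n, a' j * b j)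

/-! Each `E(v)` is a Hermitian involution, so `(1 + E(v))/2` is an orthogonal projection, and
the `E(vᵢ)` commute because the single-qubit factors commute up to the sign `(-1)^(ab' + a'b)`,
whose product over the qubits is `(-1)^⟨v, v'⟩ₛ`. For the trace, peel off one factor:
`tr((1 + E(v))/2 · M) = (tr M + tr(M E(v)))/2`, and `E(w) E(v)` is a multiple of `E(w + v)`.
Since `tr E(w) = 0` for `w ≠ 0`, induction on `m` gives `tr(P E(w)) = 0` whenever `w` lies outside
the span of the `vᵢ`; independence puts `v₁` outside the span of the others, so each factor
halves the trace, starting from `tr 1 = 2ⁿ`. -/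

namespace Matrix

variable {ι R α β γ : Type*} [Fintype ι] [CommSemiring R]

def piKronecker (M : ι → Matrix α β R) : Matrix (ι → α) (ι → β) R :=
  of fun x y => ∏ j, M j (x j) (y j)

theorem piKronecker_mul [DecidableEq ι] [Fintype β] (M : ι → Matrix α β R)
    (N : ι → Matrix β γ R) :
    piKronecker M * piKronecker N = piKronecker fun j => M j * N j := by
  ext x y
  simp only [piKronecker, mul_apply, of_apply, ← Finset.prod_mul_distrib]
  rw [Finset.prod_univ_sum, Fintype.piFinset_univ]

theorem piKronecker_one [DecidableEq α] :
    piKronecker (fun _ : ι => (1 : Matrix α α R)) = 1 := by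
  ext x y
  simp only [piKronecker, one_apply, of_apply, Fintype.prod_boole, funext_iff]

theorem piKronecker_smul (c : ι → R) (M : ι → Matrix α β R) :
    piKronecker (fun j => c j • M j) = (∏ j, c j) • piKronecker M := by
  ext x y
  simp [piKronecker, Finset.prod_mul_distrib]

theorem conjTranspose_piKronecker [StarRing R] (M : ι → Matrix α β R) :
    (piKronecker M)ᴴ = piKronecker fun j => (M j)ᴴ := by
  ext x y
  simp [piKronecker, star_prod]

theorem trace_piKronecker [DecidableEq ι] [Fintype α] (M : ι → Matrix α α R) :
    (piKronecker M).trace = ∏ j, (M j).trace := by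
  simp only [trace, diag, piKronecker, of_apply, Finset.prod_univ_sum, Fintype.piFinset_univ]

end Matrix

theorem IsStarProjection.list_prod {R : Type*} [Semiring R] [StarRing R] {l : List R}
    (h : ∀ p ∈ l, IsStarProjection p) (hl : l.Pairwise Commute) : IsStarProjection l.prod := by
  induction l with
  | nil => exact IsStarProjection.one R
  | cons p t ih =>
    rw [List.pairwise_cons] at hl
    exact (h p List.mem_cons_self).mul (ih (fun q hq => h q (List.mem_cons_of_mem p hq)) hl.2)
      (Commute.list_prod_right _ _ hl.1)

theorem isStarProjection_half_smul_one_add {K A : Type*} [Field K] [StarRing K] [NeZero (2 : K)]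
    [Ring A] [StarRing A] [Algebra K A] [StarModule K A] {u : A} (hu : IsSelfAdjoint u)
    (hu2 : u * u = 1) : IsStarProjection ((1 / 2 : K) • (1 + u)) where
  isIdempotentElem := by
    have hsq : (1 + u) * (1 + u) = (2 : K) • (1 + u) := by
      rw [add_mul, mul_add, mul_add, hu2, one_mul, one_mul, mul_one, two_smul]
      abel
    rw [IsIdempotentElem, smul_mul_smul, hsq, smul_smul]
    congr 1
    field_simp
  isSelfAdjoint := by
    simp [IsSelfAdjoint, star_add, hu.star_eq]

theorem zmod_two_eq_zero_or_eq_one (x : ZMod 2) : x = 0 ∨ x = 1 := by decide +revert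

theorem prod_neg_one_pow_val {ι R : Type*} [Fintype ι] [CommRing R]
    (x : ι → ZMod 2) : ∏ j, (-1 : R) ^ (x j).val = (-1) ^ (∑ j, x j).val := by
  rw [Finset.prod_pow_eq_pow_sum, neg_one_pow_eq_pow_mod_two, ← ZMod.val_natCast]
  simp

section Pauli

open Matrix

theorem pauliFactor_mul_self (a b : ZMod 2) : pauliFactor a b * pauliFactor a b = 1 := by
  rcases zmod_two_eq_zero_or_eq_one a with rfl | rfl <;>
  rcases zmod_two_eq_zero_or_eq_one b with rfl | rfl <;>
    simp [pauliFactor, pauliX, pauliZ, ZMod.val_one, one_fin_two]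

theorem conjTranspose_pauliFactor (a b : ZMod 2) : (pauliFactor a b)ᴴ = pauliFactor a b := by
  ext i j
  rcases zmod_two_eq_zero_or_eq_one a with rfl | rfl <;>
  rcases zmod_two_eq_zero_or_eq_one b with rfl | rfl <;>
  fin_cases i <;> fin_cases j <;>
    simp [pauliFactor, pauliX, pauliZ, ZMod.val_one]

theorem trace_pauliFactor_eq_zero {a b : ZMod 2} (h : (a, b) ≠ 0) :
    (pauliFactor a b).trace = 0 := by
  rcases zmod_two_eq_zero_or_eq_one a with rfl | rfl <;>
  rcases zmod_two_eq_zero_or_eq_one b with rfl | rfl <;>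
    simp_all [pauliFactor, pauliX, pauliZ, ZMod.val_one, trace_fin_two]

theorem pauliFactor_mul_comm (a b a' b' : ZMod 2) :
    pauliFactor a b * pauliFactor a' b' =
      (-1 : ℂ) ^ (a * b' + a' * b).val • (pauliFactor a' b' * pauliFactor a b) := by
  rcases zmod_two_eq_zero_or_eq_one a with rfl | rfl <;>
  rcases zmod_two_eq_zero_or_eq_one b with rfl | rfl <;>
  rcases zmod_two_eq_zero_or_eq_one a' with rfl | rfl <;>
  rcases zmod_two_eq_zero_or_eq_one b' with rfl | rfl <;>
    simp [pauliFactor, pauliX, pauliZ, ZMod.val_one, CharTwo.add_self_eq_zero]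

theorem exists_pauliFactor_mul_eq_smul (a b a' b' : ZMod 2) :
    ∃ c : ℂ, pauliFactor a b * pauliFactor a' b' = c • pauliFactor (a + a') (b + b') := by
  -- `N := pauliFactor (a + a') (b + b')` squares to `1`, so `c` is read off from
  -- `N * (c • N) = c • 1`.
  refine ⟨(pauliFactor (a + a') (b + b') * (pauliFactor a b * pauliFactor a' b')) 0 0, ?_⟩
  rcases zmod_two_eq_zero_or_eq_one a with rfl | rfl <;>
  rcases zmod_two_eq_zero_or_eq_one b with rfl | rfl <;>
  rcases zmod_two_eq_zero_or_eq_one a' with rfl | rfl <;>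
  rcases zmod_two_eq_zero_or_eq_one b' with rfl | rfl <;>
    simp [pauliFactor, pauliX, pauliZ, ZMod.val_one, CharTwo.add_self_eq_zero,
      one_fin_two]

variable {n : ℕ} (a b a' b' : Fin n → ZMod 2)

theorem EOp_eq_piKronecker : EOp a b = piKronecker fun j => pauliFactor (a j) (b j) := rfl

theorem EOp_mul_self : EOp a b * EOp a b = 1 := by
  simp only [EOp_eq_piKronecker, piKronecker_mul, pauliFactor_mul_self, piKronecker_one]

theorem isSelfAdjoint_EOp : IsSelfAdjoint (EOp a b) := by
  simp only [IsSelfAdjoint, star_eq_conjTranspose, EOp_eq_piKronecker, conjTranspose_piKronecker,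
    conjTranspose_pauliFactor]

theorem exists_EOp_mul_eq_smul :
    ∃ c : ℂ, EOp a b * EOp a' b' = c • EOp (a + a') (b + b') := by
  choose c hc using fun j => exists_pauliFactor_mul_eq_smul (a j) (b j) (a' j) (b' j)
  refine ⟨∏ j, c j, ?_⟩
  simp only [EOp_eq_piKronecker, piKronecker_mul, hc, piKronecker_smul, Pi.add_apply]

theorem commute_EOp (h : sympIP a b a' b' = 0) : Commute (EOp a b) (EOp a' b') := by
  have hsign : ∏ j, (-1 : ℂ) ^ (a j * b' j + a' j * b j).val = 1 := by
    rw [prod_neg_one_pow_val, Finset.sum_add_distrib, ← sympIP, h, ZMod.val_zero, pow_zero]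
  rw [Commute, SemiconjBy]
  simp only [EOp_eq_piKronecker, piKronecker_mul, pauliFactor_mul_comm (a _), piKronecker_smul,
    hsign, one_smul]

variable {a b} in
theorem trace_EOp_eq_zero (h : (a, b) ≠ 0) : (EOp a b).trace = 0 := by
  obtain ⟨j, hj⟩ : ∃ j, (a j, b j) ≠ 0 := by
    contrapose! h
    simp only [Prod.mk_eq_zero] at h
    exact Prod.ext (funext fun j => (h j).1) (funext fun j => (h j).2)
  rw [EOp_eq_piKronecker, trace_piKronecker]
  exact Finset.prod_eq_zero (Finset.mem_univ j) (trace_pauliFactor_eq_zero hj)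

end Pauli

section Projector

open Matrix Submodule

variable {n : ℕ}

local notation "𝔽" n => (Fin n → ZMod 2) × (Fin n → ZMod 2)

noncomputable def pauliProjector (v : 𝔽 n) : Matrix (Fin n → Fin 2) (Fin n → Fin 2) ℂ :=
  ((1 : ℂ) / 2) • (1 + EOp v.1 v.2)

noncomputable def codeProjector {m : ℕ} (v : Fin m → 𝔽 n) :
    Matrix (Fin n → Fin 2) (Fin n → Fin 2) ℂ :=
  (List.ofFn fun i => pauliProjector (v i)).prod

theorem codeProjector_zero (v : Fin 0 → 𝔽 n) : codeProjector v = 1 := rfl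

theorem codeProjector_succ {m : ℕ} (v : Fin (m + 1) → 𝔽 n) :
    codeProjector v = pauliProjector (v 0) * codeProjector (Fin.tail v) := by
  rw [codeProjector, List.ofFn_succ, List.prod_cons]
  rfl

theorem isStarProjection_codeProjector {m : ℕ} (v : Fin m → 𝔽 n)
    (hv : ∀ i j, sympIP (v i).1 (v i).2 (v j).1 (v j).2 = 0) :
    IsStarProjection (codeProjector v) := by
  refine IsStarProjection.list_prod ?_ (List.pairwise_ofFn.mpr fun i j _ => ?_)
  · simp only [List.mem_ofFn, forall_exists_index, forall_apply_eq_imp_iff]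
    exact fun i => isStarProjection_half_smul_one_add (isSelfAdjoint_EOp _ _) (EOp_mul_self _ _)
  · have h : Commute (1 + EOp (v i).1 (v i).2) (1 + EOp (v j).1 (v j).2) :=
      (Commute.one_left _).add_left ((Commute.one_right _).add_right (commute_EOp _ _ _ _ (hv i j)))
    exact (h.smul_left _).smul_right _

theorem trace_pauliProjector_mul (v : 𝔽 n) (M : Matrix (Fin n → Fin 2) (Fin n → Fin 2) ℂ) :
    (pauliProjector v * M).trace = (M.trace + (M * EOp v.1 v.2).trace) / 2 := by
  rw [trace_mul_comm, pauliProjector, Matrix.mul_smul, mul_add, mul_one, trace_smul, trace_add,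
    smul_eq_mul]
  ring

theorem trace_codeProjector_mul_EOp_eq_zero {m : ℕ} (v : Fin m → 𝔽 n) (w : 𝔽 n)
    (hw : w ∉ span (ZMod 2) (Set.range v)) : (codeProjector v * EOp w.1 w.2).trace = 0 := by
  induction m generalizing w with
  | zero =>
    rw [codeProjector_zero, one_mul]
    exact trace_EOp_eq_zero (by simpa using hw)
  | succ m ih =>
    rw [Fin.range_fin_succ] at hw
    have hw₁ : w ∉ span (ZMod 2) (Set.range (Fin.tail v)) :=
      fun h => hw (span_mono (Set.subset_insert _ _) h)
    have hw₂ : w + v 0 ∉ span (ZMod 2) (Set.range (Fin.tail v)) :=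
      fun h => hw (mem_span_insert.mpr ⟨-1, w + v 0, h, by module⟩)
    obtain ⟨c, hc⟩ := exists_EOp_mul_eq_smul w.1 w.2 (v 0).1 (v 0).2
    rw [codeProjector_succ, mul_assoc, trace_pauliProjector_mul, mul_assoc, hc, Matrix.mul_smul,
      trace_smul, ih _ _ hw₁]
    have h₂ := ih _ _ hw₂
    rw [Prod.fst_add, Prod.snd_add] at h₂
    simp [h₂]

theorem trace_codeProjector {m : ℕ} (v : Fin m → 𝔽 n) (hv : LinearIndependent (ZMod 2) v) :
    (codeProjector v).trace = (2 : ℂ) ^ ((n : ℤ) - m) := by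
  induction m with
  | zero => simp [codeProjector_zero]
  | succ m ih =>
    obtain ⟨htail, hv0⟩ := linearIndependent_finSucc.mp hv
    rw [codeProjector_succ, trace_pauliProjector_mul, ih _ htail,
      trace_codeProjector_mul_EOp_eq_zero _ _ hv0]
    rw [Nat.cast_succ, ← sub_sub, zpow_sub_one₀ two_ne_zero]
    ring

end Projector

theorem stabilizer_projector_trace_general (n m : ℕ)
    (a b : Fin m → (Fin n → ZMod 2))
    (hind : LinearIndependent (ZMod 2) (fun i : Fin m => (a i, b i)))
    (hcomm : ∀ i j : Fin m, sympIP (a i) (b i) (a j) (b j) = 0) :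
    let P : Matrix (Fin n → Fin 2) (Fin n → Fin 2) ℂ :=
      (List.ofFn fun i : Fin m =>
        ((1 : ℂ) / 2) • ((1 : Matrix (Fin n → Fin 2) (Fin n → Fin 2) ℂ) + EOp (a i) (b i))).prod
    P ^ 2 = P ∧ Pᴴ = P ∧ P.trace = (2 : ℂ) ^ ((n : ℤ) - (m : ℤ)) := by
  intro P
  have hP : IsStarProjection P := isStarProjection_codeProjector (fun i => (a i, b i)) hcomm
  exact ⟨hP.pow_eq two_ne_zero, hP.isSelfAdjoint,
    trace_codeProjector (fun i => (a i, b i)) hind⟩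

theorem stabilizer_projector_trace (n m : ℕ) (hn : 1 ≤ n)
    (a b : Fin m → (Fin n → ZMod 2))
    (hind : LinearIndependent (ZMod 2) (fun i : Fin m => (a i, b i)))
    (hcomm : ∀ i j : Fin m, sympIP (a i) (b i) (a j) (b j) = 0) :
    let P : Matrix (Fin n → Fin 2) (Fin n → Fin 2) ℂ :=
      (List.ofFn fun i : Fin m =>
        ((1 : ℂ) / 2) • ((1 : Matrix (Fin n → Fin 2) (Fin n → Fin 2) ℂ) + EOp (a i) (b i))).prod
    P ^ 2 = P ∧ Pᴴ = P ∧ P.trace = (2 : ℂ) ^ ((n : ℤ) - (m : ℤ)) :=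
  stabilizer_projector_trace_general n m a b hind hcomm
end

section
/- Let U be a 2n×2n matrix over F₂ with rows u₁, …, u_{2n} satisfying U Ω Uᵀ = Ω, where Ω = [[0,Iₙ],[Iₙ,0]]. Let J ⊆ {1,…,n} with |J| = r, and let I = J ∪ {n+j : j ∈ J} (the indices of r symplectic pairs of rows). Suppose g₁, …, g_{2r} ∈ F₂^{2n} all lie in the F₂-span of {uᵢ : i ∈ I} and satisfy ⟨gₛ, gₜ⟩ₛ = 1 if |s − t| = r and ⟨gₛ, gₜ⟩ₛ = 0 otherwise, for all 1 ≤ s, t ≤ 2r. Let U' be the matrix obtained from U by replacing the rows indexed by J with g₁, …, g_r (in order) and the rows indexed by {n+j : j ∈ J} with g_{r+1}, …, g_{2r} (in order). Then U' Ω (U')ᵀ = Ω; i.e., U' again represents a valid (subsystem) code. -/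
open scoped Matrix

/-- The standard symplectic form `Ω = [[0, Iₙ],[Iₙ, 0]]` on `F₂^{2n}`,
with the `2n` coordinates indexed by `Fin n ⊕ Fin n`. -/
def Omega (n : ℕ) : Matrix (Fin n ⊕ Fin n) (Fin n ⊕ Fin n) (ZMod 2) :=
  Matrix.fromBlocks 0 1 1 0

/-- The symplectic inner product `⟨u,v⟩ₛ = u Ω vᵀ` of row vectors `u, v ∈ F₂^{2n}`. -/
def symp {n : ℕ} (u v : (Fin n ⊕ Fin n) → ZMod 2) : ZMod 2 :=
  ∑ j : Fin n, (u (Sum.inl j) * v (Sum.inr j) + u (Sum.inr j) * v (Sum.inl j))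

lemma mulOmega_apply {n : ℕ} (A B : Matrix (Fin n ⊕ Fin n) (Fin n ⊕ Fin n) (ZMod 2))
    (i k : Fin n ⊕ Fin n) : (A * Omega n * Bᵀ) i k = symp (A i) (B k) := by
  simp [Matrix.mul_apply, Matrix.transpose_apply, Omega, Matrix.fromBlocks,
    Fintype.sum_sum_type, Matrix.one_apply, symp, Finset.sum_mul, Finset.mul_sum,
    Finset.sum_ite_eq, Finset.sum_ite_eq']
  rw [Finset.sum_add_distrib, add_comm]

lemma symp_comm {n : ℕ} (u v : (Fin n ⊕ Fin n) → ZMod 2) : symp u v = symp v u := by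
  unfold symp; exact Finset.sum_congr rfl fun j _ => by ring

lemma symp_add_left {n : ℕ} (u v w : (Fin n ⊕ Fin n) → ZMod 2) :
    symp (u + v) w = symp u w + symp v w := by
  unfold symp; rw [← Finset.sum_add_distrib]; exact Finset.sum_congr rfl fun j _ => by
    simp [Pi.add_apply]; ring

lemma symp_smul_left {n : ℕ} (c : ZMod 2) (u w : (Fin n ⊕ Fin n) → ZMod 2) :
    symp (c • u) w = c * symp u w := by
  unfold symp; rw [Finset.mul_sum]; exact Finset.sum_congr rfl fun j _ => by
    simp [Pi.smul_apply, smul_eq_mul]; ring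

lemma Omega_comm {n : ℕ} (i k : Fin n ⊕ Fin n) : Omega n i k = Omega n k i := by
  cases i <;> cases k <;> simp [Omega, Matrix.fromBlocks, Matrix.one_apply, eq_comm]

lemma Omega_map_map {n r : ℕ} {ι : Fin r → Fin n} (hι : Function.Injective ι)
    (s t : Fin r ⊕ Fin r) : Omega n (Sum.map ι ι s) (Sum.map ι ι t) = Omega r s t := by
  cases s <;> cases t <;> simp [Omega, Matrix.fromBlocks, Matrix.one_apply, hι.eq_iff]

lemma Omega_map_ne {n r : ℕ} {ι : Fin r → Fin n}
    (s : Fin r ⊕ Fin r) (k : Fin n ⊕ Fin n) (hk : ∀ t : Fin r ⊕ Fin r, k ≠ Sum.map ι ι t) :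
    Omega n (Sum.map ι ι s) k = 0 := by
  cases s with
  | inl a =>
    cases k with
    | inl b => simp [Omega]
    | inr b =>
      simp only [Omega, Sum.map_inl, Matrix.fromBlocks_apply₁₂, Matrix.one_apply]
      rw [if_neg]
      intro h
      exact hk (Sum.inr a) (by simp [← h])
  | inr a =>
    cases k with
    | inr b => simp [Omega]
    | inl b =>
      simp only [Omega, Sum.map_inr, Matrix.fromBlocks_apply₂₁, Matrix.one_apply]
      rw [if_neg]
      intro h
      exact hk (Sum.inl a) (by simp [← h])

theorem replace_rows_symplectic (n r : ℕ) (hn : 1 ≤ n) (hr : r ≤ n)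
    (U : Matrix (Fin n ⊕ Fin n) (Fin n ⊕ Fin n) (ZMod 2))
    (hU : U * Omega n * Uᵀ = Omega n)
    (ι : Fin r → Fin n) (hι : Function.Injective ι)
    (g : Fin r ⊕ Fin r → ((Fin n ⊕ Fin n) → ZMod 2))
    (hspan : ∀ s : Fin r ⊕ Fin r,
      g s ∈ Submodule.span (ZMod 2)
        (Set.range fun t : Fin r ⊕ Fin r => (fun j => U (Sum.map ι ι t) j)))
    (hpair : ∀ s t : Fin r ⊕ Fin r, symp (g s) (g t) = Omega r s t)
    (U' : Matrix (Fin n ⊕ Fin n) (Fin n ⊕ Fin n) (ZMod 2))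
    (hrepl : ∀ (s : Fin r ⊕ Fin r) (j : Fin n ⊕ Fin n), U' (Sum.map ι ι s) j = g s j)
    (hkeep : ∀ i : Fin n ⊕ Fin n, (∀ s : Fin r ⊕ Fin r, i ≠ Sum.map ι ι s) →
      ∀ j : Fin n ⊕ Fin n, U' i j = U i j) :
    U' * Omega n * U'ᵀ = Omega n := by
  -- key: symp of g s against an untouched row vanishes
  have key : ∀ (s : Fin r ⊕ Fin r) (k : Fin n ⊕ Fin n),
      (∀ t : Fin r ⊕ Fin r, k ≠ Sum.map ι ι t) → symp (g s) (U k) = 0 := by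
    intro s k hk
    refine Submodule.span_induction ?_ ?_ ?_ ?_ (hspan s)
    · rintro v ⟨t, rfl⟩
      have : symp (U (Sum.map ι ι t)) (U k) = (U * Omega n * Uᵀ) (Sum.map ι ι t) k :=
        (mulOmega_apply U U _ _).symm
      show symp (U (Sum.map ι ι t)) (U k) = 0
      rw [this, hU, Omega_map_ne t k hk]
    · simp [symp]
    · intro u v _ _ hu hv
      rw [symp_add_left, hu, hv, add_zero]
    · intro c u _ hu
      rw [symp_smul_left, hu, mul_zero]
  ext i k
  rw [mulOmega_apply]
  by_cases hi : ∃ s, i = Sum.map ι ι s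
  · obtain ⟨s, rfl⟩ := hi
    have hrow : U' (Sum.map ι ι s) = g s := funext (hrepl s)
    by_cases hk : ∃ t, k = Sum.map ι ι t
    · obtain ⟨t, rfl⟩ := hk
      rw [hrow, funext (hrepl t), hpair, Omega_map_map hι]
    · push_neg at hk
      rw [hrow, funext (hkeep k hk), key s k hk, Omega_map_ne s k hk]
  · push_neg at hi
    rw [funext (hkeep i hi)]
    by_cases hk : ∃ t, k = Sum.map ι ι t
    · obtain ⟨t, rfl⟩ := hk
      rw [funext (hrepl t), symp_comm, key t i hi, Omega_comm, Omega_map_ne t i hi]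
    · push_neg at hk
      rw [funext (hkeep k hk), ← mulOmega_apply U U, hU]
end

section
/- For every r ≥ 1, the number of ordered tuples (u₁, …, u_{2r}) of vectors of F₂^{2r} satisfying ⟨uᵢ,uⱼ⟩ₛ = Ωᵢⱼ for all 1 ≤ i, j ≤ 2r (i.e., the number of ordered symplectic bases of F₂^{2r}) equals (∏_{l=0}^{r−1} (2^{2r−2l} − 1)) · (∏_{m ∈ {1,3,5,…,2r−1}} 2^{2r−m}). -/
/-!
Extending an ordered symplectic family `(u, v)` of `l` hyperbolic pairs by one more pair `(e, f)`
amounts to choosing a nonzero `e` orthogonal to the family, then an `f` orthogonal to it with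
`⟨f, e⟩ = 1`. A symplectic family is linearly independent, and stays so after adjoining such an
`e`; since the form is nondegenerate, each choice is therefore the solution set of `2l`
(resp. `2l + 1`) independent linear equations in `F₂^{2r}`, of size `2^{2r-2l}` (minus the zero
vector) resp. `2^{2r-2l-1}`. Induction on the number of pairs multiplies these counts.
-/

open scoped Matrix

open Module

theorem natCard_subtype_prod_eq_mul {α β : Type*} [Finite α] [Finite β] (p : α → Prop)
    (q : α → β → Prop) {N : ℕ} (hq : ∀ a, p a → Nat.card {b // q a b} = N) :
    Nat.card {x : α × β // p x.1 ∧ q x.1 x.2} = Nat.card {a // p a} * N := by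
  have : Fintype {a // p a} := Fintype.ofFinite _
  calc Nat.card {x : α × β // p x.1 ∧ q x.1 x.2}
      = Nat.card (Σ a : {a // p a}, {b // q a b}) :=
        Nat.card_congr
          { toFun x := ⟨⟨x.1.1, x.2.1⟩, x.1.2, x.2.2⟩
            invFun y := ⟨(y.1, y.2.1), y.1.2, y.2.2⟩
            left_inv _ := rfl
            right_inv _ := rfl }
    _ = ∑ _a : {a // p a}, N := by
        rw [Nat.card_sigma]
        exact Finset.sum_congr rfl fun a _ => hq a a.2
    _ = Nat.card {a // p a} * N := by simp [Nat.card_eq_fintype_card]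

theorem LinearIndependent.exists_dual_apply_eq {K V ι : Type*} [Field K] [AddCommGroup V]
    [Module K V] {v : ι → V} (hv : LinearIndependent K v) (c : ι → K) :
    ∃ ψ : Dual K V, ∀ i, ψ (v i) = c i := by
  obtain ⟨ψ, hψ⟩ := LinearMap.dualMap_surjective_of_injective hv (Finsupp.linearCombination K c)
  exact ⟨ψ, fun i => by simpa using LinearMap.congr_fun hψ (Finsupp.single i 1)⟩

namespace LinearMap.BilinForm

theorem natCard_forall_apply_eq {K V ι : Type*} [Field K] [AddCommGroup V] [Module K V]
    [FiniteDimensional K V] [Fintype ι] {B : LinearMap.BilinForm K V} (hB : B.Nondegenerate)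
    {v : ι → V} (hv : LinearIndependent K v) (c : ι → K) :
    Nat.card {x : V // ∀ i, B x (v i) = c i} = Nat.card K ^ (finrank K V - Fintype.card ι) := by
  let φ : V →ₗ[K] ι → K := LinearMap.pi fun i => B.flip (v i)
  have hφ : Function.Surjective φ := fun c => by
    obtain ⟨ψ, hψ⟩ := hv.exists_dual_apply_eq c
    exact ⟨(B.toDual hB).symm ψ, funext fun i => by simp [φ, hψ]⟩
  have hker : finrank K (ker φ) = finrank K V - Fintype.card ι := by
    have := φ.finrank_range_add_finrank_ker
    rw [range_eq_top.2 hφ, finrank_top, finrank_fintype_fun_eq_card] at this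
    omega
  calc Nat.card {x : V // ∀ i, B x (v i) = c i}
      = Nat.card (φ ⁻¹' {c}) := Nat.card_congr <| Equiv.subtypeEquivRight fun x => by
        simp [φ, funext_iff]
    _ = Nat.card (ker φ) := Nat.card_congr (φ.toAddMonoidHom.fiberEquivKerOfSurjective hφ c)
    _ = Nat.card K ^ (finrank K V - Fintype.card ι) := by
        rw [natCard_eq_pow_finrank (K := K), hker]

theorem IsAlt.apply_comm {R M : Type*} [CommRing R] [CharP R 2] [AddCommGroup M] [Module R M]
    {B : LinearMap.BilinForm R M} (hB : B.IsAlt) (x y : M) : B x y = B y x := by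
  rw [← hB.neg_eq, CharTwo.neg_eq]

end LinearMap.BilinForm

@[simp] theorem Omega_inl_inl {n : ℕ} (a b : Fin n) : Omega n (.inl a) (.inl b) = 0 := rfl

@[simp] theorem Omega_inr_inr {n : ℕ} (a b : Fin n) : Omega n (.inr a) (.inr b) = 0 := rfl

@[simp] theorem Omega_inl_inr {n : ℕ} (a b : Fin n) :
    Omega n (.inl a) (.inr b) = if a = b then 1 else 0 := Matrix.one_apply

@[simp] theorem Omega_inr_inl {n : ℕ} (a b : Fin n) :
    Omega n (.inr a) (.inl b) = if a = b then 1 else 0 := Matrix.one_apply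

theorem Omega_apply_swap {n : ℕ} (i j : Fin n ⊕ Fin n) :
    Omega n i j.swap = if i = j then 1 else 0 := by
  rcases i with a | a <;> rcases j with b | b <;> simp [eq_comm]

def IsSymplecticFamily {V : Type*} [AddCommGroup V] [Module (ZMod 2) V]
    (B : LinearMap.BilinForm (ZMod 2) V) {k : ℕ} (u : Fin k ⊕ Fin k → V) : Prop :=
  ∀ i j, B (u i) (u j) = Omega k i j

def sumSnoc {V : Type*} {k : ℕ} (u : Fin k ⊕ Fin k → V) (e f : V) :
    Fin (k + 1) ⊕ Fin (k + 1) → V :=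
  Sum.elim (Fin.snoc (u ∘ Sum.inl) e) (Fin.snoc (u ∘ Sum.inr) f)

def sumSnocEquiv (V : Type*) (k : ℕ) :
    (Fin k ⊕ Fin k → V) × V × V ≃ (Fin (k + 1) ⊕ Fin (k + 1) → V) where
  toFun x := sumSnoc x.1 x.2.1 x.2.2
  invFun u := (u ∘ Sum.map Fin.castSucc Fin.castSucc, u (.inl (.last k)), u (.inr (.last k)))
  left_inv x := by
    ext (i | i) <;> simp [sumSnoc]
  right_inv u := by
    ext (i | i) <;> induction i using Fin.lastCases <;> simp [sumSnoc]

section Symplectic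

variable {V : Type*} [AddCommGroup V] [Module (ZMod 2) V] {B : LinearMap.BilinForm (ZMod 2) V}
  {k : ℕ}

namespace IsSymplecticFamily

variable {u : Fin k ⊕ Fin k → V}

theorem apply_sum_smul_swap (hu : IsSymplecticFamily B u) (g : Fin k ⊕ Fin k → ZMod 2)
    (j : Fin k ⊕ Fin k) : B (∑ i, g i • u i) (u j.swap) = g j := by
  simp [hu _ _, Omega_apply_swap, -Fintype.sum_sum_type]

theorem linearIndependent (hu : IsSymplecticFamily B u) : LinearIndependent (ZMod 2) u :=
  Fintype.linearIndependent_iff.2 fun g hg j => by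
    simpa [hg] using (hu.apply_sum_smul_swap g j).symm

theorem eq_zero_of_mem_span (hu : IsSymplecticFamily B u) {x : V}
    (hx : x ∈ Submodule.span (ZMod 2) (Set.range u)) (horth : ∀ i, B x (u i) = 0) : x = 0 := by
  obtain ⟨g, rfl⟩ := Submodule.mem_span_range_iff_exists_fun (ZMod 2) |>.1 hx
  have hg : g = 0 := funext fun j => by rw [← hu.apply_sum_smul_swap g j, horth]; rfl
  simp [hg]

theorem linearIndependent_sum_elim (hu : IsSymplecticFamily B u) {e : V}
    (he : ∀ i, B e (u i) = 0) (he0 : e ≠ 0) :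
    LinearIndependent (ZMod 2) (Sum.elim u fun _ : Unit => e) := by
  refine hu.linearIndependent.sum_type (linearIndependent_unique_iff.2 he0) ?_
  rw [Set.range_const, Submodule.disjoint_def]
  intro x hxu hxe
  obtain ⟨a, rfl⟩ := Submodule.mem_span_singleton.1 hxe
  exact hu.eq_zero_of_mem_span hxu fun i => by simp [he]

end IsSymplecticFamily

theorem isSymplecticFamily_sumSnoc_iff (hB : B.IsAlt) (u : Fin k ⊕ Fin k → V) (e f : V) :
    IsSymplecticFamily B (sumSnoc u e f) ↔
      IsSymplecticFamily B u ∧ ((∀ i, B e (u i) = 0) ∧ (∀ i, B f (u i) = 0) ∧ B f e = 1) := by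
  simp only [IsSymplecticFamily, sumSnoc, Sum.forall, Fin.forall_fin_succ', Sum.elim_inl,
    Sum.elim_inr, Fin.snoc_castSucc, Fin.snoc_last, Function.comp_apply, Omega_inl_inl,
    Omega_inr_inr, Omega_inl_inr, Omega_inr_inl, Fin.castSucc_inj, Fin.castSucc_ne_last,
    (Fin.castSucc_ne_last _).symm, hB.self_eq_zero, hB.apply_comm (u _) e,
    hB.apply_comm (u _) f, hB.apply_comm e f, if_true, if_false, and_true, forall_and]
  tauto

variable [Finite V]

theorem IsSymplecticFamily.natCard_hyperbolicPairs (hB : B.Nondegenerate)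
    {u : Fin k ⊕ Fin k → V} (hu : IsSymplecticFamily B u) :
    Nat.card {p : V × V // (∀ i, B p.1 (u i) = 0) ∧ (∀ i, B p.2 (u i) = 0) ∧ B p.2 p.1 = 1} =
      (2 ^ (finrank (ZMod 2) V - 2 * k) - 1) * 2 ^ (finrank (ZMod 2) V - (2 * k + 1)) := by
  have hnonzero : Nat.card {e : V // (∀ i, B e (u i) = 0) ∧ e ≠ 0} =
      2 ^ (finrank (ZMod 2) V - 2 * k) - 1 := by
    calc Nat.card {e : V // (∀ i, B e (u i) = 0) ∧ e ≠ 0}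
        = ({e : V | ∀ i, B e (u i) = 0} \ {0}).ncard := rfl
      _ = Nat.card {e : V // ∀ i, B e (u i) = 0} - 1 :=
          Set.ncard_sdiff_singleton_of_mem fun i => by simp
      _ = 2 ^ (finrank (ZMod 2) V - 2 * k) - 1 := by
          simpa [two_mul] using congrArg (· - 1)
            (LinearMap.BilinForm.natCard_forall_apply_eq hB hu.linearIndependent 0)
  have hfiber : ∀ e : V, (∀ i, B e (u i) = 0) ∧ e ≠ 0 →
      Nat.card {f : V // (∀ i, B f (u i) = 0) ∧ B f e = 1} =
        2 ^ (finrank (ZMod 2) V - (2 * k + 1)) := by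
    rintro e ⟨he, he0⟩
    calc Nat.card {f : V // (∀ i, B f (u i) = 0) ∧ B f e = 1}
        = Nat.card {f : V // ∀ i, B f (Sum.elim u (fun _ : Unit => e) i) =
            Sum.elim (fun _ => 0) (fun _ => 1) i} :=
          Nat.card_congr <| Equiv.subtypeEquivRight fun f => by simp [Sum.forall]
      _ = 2 ^ (finrank (ZMod 2) V - (2 * k + 1)) := by
          rw [LinearMap.BilinForm.natCard_forall_apply_eq hB
            (hu.linearIndependent_sum_elim he he0)]
          simp [two_mul]
  calc Nat.card {p : V × V // (∀ i, B p.1 (u i) = 0) ∧ (∀ i, B p.2 (u i) = 0) ∧ B p.2 p.1 = 1}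
      = Nat.card {p : V × V //
          ((∀ i, B p.1 (u i) = 0) ∧ p.1 ≠ 0) ∧ (∀ i, B p.2 (u i) = 0) ∧ B p.2 p.1 = 1} :=
        Nat.card_congr <| Equiv.subtypeEquivRight fun p => by
          refine ⟨fun ⟨he, hf, hfe⟩ => ⟨⟨he, ?_⟩, hf, hfe⟩, fun ⟨⟨he, _⟩, hfe⟩ => ⟨he, hfe⟩⟩
          rintro h
          simp [h] at hfe
    _ = _ := by
        rw [natCard_subtype_prod_eq_mul _ (fun e f => (∀ i, B f (u i) = 0) ∧ B f e = 1) hfiber,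
          hnonzero]

theorem natCard_isSymplecticFamily (hB : B.Nondegenerate) (hAlt : B.IsAlt) (k : ℕ) :
    Nat.card {u : Fin k ⊕ Fin k → V // IsSymplecticFamily B u} =
      ∏ l ∈ Finset.range k,
        (2 ^ (finrank (ZMod 2) V - 2 * l) - 1) * 2 ^ (finrank (ZMod 2) V - (2 * l + 1)) := by
  induction k with
  | zero => simp [IsSymplecticFamily]
  | succ k ih =>
    calc Nat.card {u : Fin (k + 1) ⊕ Fin (k + 1) → V // IsSymplecticFamily B u}
        = Nat.card {x : (Fin k ⊕ Fin k → V) × V × V // IsSymplecticFamily B x.1 ∧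
            (∀ i, B x.2.1 (x.1 i) = 0) ∧ (∀ i, B x.2.2 (x.1 i) = 0) ∧ B x.2.2 x.2.1 = 1} :=
          (Nat.card_congr ((sumSnocEquiv V k).subtypeEquiv fun x =>
            (isSymplecticFamily_sumSnoc_iff hAlt x.1 x.2.1 x.2.2).symm)).symm
      _ = _ := by
          rw [natCard_subtype_prod_eq_mul (IsSymplecticFamily B) _
            fun u₀ hu₀ => hu₀.natCard_hyperbolicPairs hB, ih, Finset.prod_range_succ]

end Symplectic

def sympForm (r : ℕ) : LinearMap.BilinForm (ZMod 2) (Fin r ⊕ Fin r → ZMod 2) :=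
  LinearMap.mk₂ (ZMod 2) symp
    (fun _ _ _ => by
      simp only [symp, Pi.add_apply, ← Finset.sum_add_distrib]
      exact Finset.sum_congr rfl fun _ _ => by ring)
    (fun _ _ _ => by
      simp only [symp, Pi.smul_apply, smul_eq_mul, Finset.mul_sum]
      exact Finset.sum_congr rfl fun _ _ => by ring)
    (fun _ _ _ => by
      simp only [symp, Pi.add_apply, ← Finset.sum_add_distrib]
      exact Finset.sum_congr rfl fun _ _ => by ring)
    (fun _ _ _ => by
      simp only [symp, Pi.smul_apply, smul_eq_mul, Finset.mul_sum]
      exact Finset.sum_congr rfl fun _ _ => by ring)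

theorem sympForm_isAlt (r : ℕ) : (sympForm r).IsAlt := fun u =>
  show symp u u = 0 from Finset.sum_eq_zero fun j _ => by
    rw [mul_comm (u (.inr j))]
    exact CharTwo.add_self_eq_zero _

theorem sympForm_nondegenerate (r : ℕ) : (sympForm r).Nondegenerate := by
  refine (sympForm_isAlt r).isRefl.nondegenerate_iff_separatingLeft.2 fun x hx => ?_
  ext (j | j)
  · simpa [sympForm, symp, Pi.single_apply] using hx (Pi.single (.inr j) 1)
  · simpa [sympForm, symp, Pi.single_apply] using hx (Pi.single (.inl j) 1)

theorem card_ordered_symplectic_bases_general (r : ℕ) :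
    Nat.card {u : (Fin r ⊕ Fin r) → ((Fin r ⊕ Fin r) → ZMod 2) //
        ∀ i j : Fin r ⊕ Fin r, symp (u i) (u j) = Omega r i j}
      = (∏ l ∈ Finset.range r, (2 ^ (2 * r - 2 * l) - 1)) *
        (∏ m ∈ Finset.range r, 2 ^ (2 * r - (2 * m + 1))) := by
  have hdim : finrank (ZMod 2) (Fin r ⊕ Fin r → ZMod 2) = 2 * r := by simp [two_mul]
  rw [← Finset.prod_mul_distrib, ← hdim]
  exact natCard_isSymplecticFamily (sympForm_nondegenerate r) (sympForm_isAlt r) r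

theorem card_ordered_symplectic_bases (r : ℕ) (hr : 1 ≤ r) :
    Nat.card {u : (Fin r ⊕ Fin r) → ((Fin r ⊕ Fin r) → ZMod 2) //
        ∀ i j : Fin r ⊕ Fin r, symp (u i) (u j) = Omega r i j}
      = (∏ l ∈ Finset.range r, (2 ^ (2 * r - 2 * l) - 1)) *
        (∏ m ∈ Finset.range r, 2 ^ (2 * r - (2 * m + 1))) :=
  card_ordered_symplectic_bases_general r
end

section
/- Let H be an m×n matrix and G a k×n matrix over F₂ with G·Hᵀ = 0 (equivalently H·Gᵀ = 0). Define the subsystem hypergraph product (SHP) matrices G_X := H ⊗ Iₙ, G_Z := Iₙ ⊗ H, L_X := Iₙ ⊗ G, L_Z := G ⊗ Iₙ, S_X := H ⊗ G, S_Z := G ⊗ H, where ⊗ denotes the Kronecker product. Then all of the following products vanish over F₂: S_X·S_Zᵀ = 0, S_X·G_Zᵀ = 0, S_X·L_Zᵀ = 0, G_X·S_Zᵀ = 0, G_X·L_Zᵀ = 0, L_X·S_Zᵀ = 0, and L_X·G_Zᵀ = 0. (Hence in the SHP construction the stabilizers S_X, S_Z commute with all gauge and logical generators, and the bare logical operators commute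 with the gauge generators.) -/
open scoped Matrix Kronecker

theorem SHP_commutation (m n k : ℕ)
    (H : Matrix (Fin m) (Fin n) (ZMod 2)) (G : Matrix (Fin k) (Fin n) (ZMod 2))
    (hGH : G * Hᵀ = 0) :
    let In : Matrix (Fin n) (Fin n) (ZMod 2) := 1
    let GX := H ⊗ₖ In
    let GZ := In ⊗ₖ H
    let LX := In ⊗ₖ G
    let LZ := G ⊗ₖ In
    let SX := H ⊗ₖ G
    let SZ := G ⊗ₖ H
    SX * SZᵀ = 0 ∧ SX * GZᵀ = 0 ∧ SX * LZᵀ = 0 ∧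
      GX * SZᵀ = 0 ∧ GX * LZᵀ = 0 ∧ LX * SZᵀ = 0 ∧ LX * GZᵀ = 0 := by
  intro In GX GZ LX LZ SX SZ
  have hHG : H * Gᵀ = 0 := by
    have := congrArg Matrix.transpose hGH
    simpa [Matrix.transpose_mul] using this
  refine ⟨?_, ?_, ?_, ?_, ?_, ?_, ?_⟩ <;>
    simp only [GX, GZ, LX, LZ, SX, SZ, In] <;>
    rw [← Matrix.kroneckerMap_transpose, ← Matrix.mul_kronecker_mul] <;>
    simp [hGH, hHG, Matrix.zero_kronecker, Matrix.kronecker_zero]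
end
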